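/- arXiv:1604.06869 — 2 statements merged into one kernel-verified Lean document; each statement's English description precedes it below -/
import Mathlib

section
/- Let 3 ≤ l ≤ 8, let {±a_1,...,±a_l} be a C_l-frame relative to P, let δ ∈ ℂ, and fix x ∈ V. Assume that [⟨a_i+a_j,x⟩]·[⟨a_i−a_j,x⟩] ≠ 0 for all distinct i,j ∈ {1,...,l}, and that τ : V → ℂ satisfies, for every triple of pairwise distinct i,j,k ∈ {1,...,l}, the Hirota equation [⟨a_j+a_k,x⟩][⟨a_j−a_k,x⟩]τ(x+a_iδ)τ(x−a_iδ) + [⟨a_k+a_i,x⟩][⟨a_k−a_i,x⟩]τ(x+a_jδ)τ(x−a_jδ) + [⟨a_i+a_j,x⟩][⟨a_i−a_j,x⟩]τ(x+a_kδ)τ(x−a_kδ) = 0. For distinct i,j and any u ∈ V define f_{ij}(x;u) = ( [⟨u,x⟩+⟨a_j,x⟩][⟨u,x⟩−⟨a_j,x⟩]·τ(x+a_iδ)τ(x−a_iδ) − [⟨u,x⟩+⟨a_i,x⟩][⟨u,x⟩−⟨a_i,x⟩]·τ(x+a_jδ)τ(x−a_jδ) ) / ( [⟨a_i+a_j,x⟩][⟨a_i−a_j,x⟩]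 ). Then: (1) f_{ij}(x;u) does not depend on the choice of the pair of distinct indices i,j; (2) writing f(x;u) for the common value, one has f(x;u_0)·[⟨u_1+u_2,x⟩][⟨u_1−u_2,x⟩] + f(x;u_1)·[⟨u_2+u_0,x⟩][⟨u_2−u_0,x⟩] + f(x;u_2)·[⟨u_0+u_1,x⟩][⟨u_0−u_1,x⟩] = 0 for all u_0,u_1,u_2 ∈ V; (3) f(x;a_k) = τ(x+a_kδ)τ(x−a_kδ) for every k ∈ {1,...,l}. -/
noncomputable section

/-- `V = ℂ^8`. -/
abbrev V8 : Type := Fin 8 → ℂ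

/-- The symmetric bilinear form `⟨x,y⟩ = ∑ᵢ xᵢ yᵢ` on `V`. -/
def ip (x y : V8) : ℂ := ∑ i, x i * y i

/-- `φ = (1/2, …, 1/2)`. -/
def phi8 : V8 := fun _ => (1 : ℂ) / 2

/-- `x` has all coordinates in `ℤ`. -/
def IsIntVec (x : V8) : Prop := ∀ i, ∃ n : ℤ, x i = (n : ℂ)

/-- The `E₈` root lattice `P = {a ∈ ℤ⁸ ∪ (φ + ℤ⁸) : ⟨φ,a⟩ ∈ ℤ}`. -/
def E8lat : Set V8 :=
  {a | (IsIntVec a ∨ IsIntVec (a - phi8)) ∧ ∃ n : ℤ, ip phi8 a = (n : ℂ)}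

/-- A `C_l`-frame relative to `P`: a set `A = {±a₀, …, ±a_{l-1}}` with
`⟨aᵢ,aⱼ⟩ = δᵢⱼ`, `aᵢ ± aⱼ ∈ P` for `i < j`, and `2aᵢ ∈ P`. -/
def IsClFrame (l : ℕ) (A : Set V8) : Prop :=
  ∃ a : Fin l → V8,
    A = Set.range a ∪ Set.range (fun i => -a i) ∧
    (∀ i j, ip (a i) (a j) = if i = j then 1 else 0) ∧
    (∀ i j, i < j → a i + a j ∈ E8lat ∧ a i - a j ∈ E8lat) ∧
    (∀ i, (2 : ℂ) • a i ∈ E8lat)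

/-- The three-term relation `[β±γ][z±α] + [γ±α][z±β] + [α±β][z±γ] = 0`. -/
def ThreeTermRel (br : ℂ → ℂ) : Prop :=
  ∀ z α β γ : ℂ,
    br (β + γ) * br (β - γ) * (br (z + α) * br (z - α)) +
      br (γ + α) * br (γ - α) * (br (z + β) * br (z - β)) +
      br (α + β) * br (α - β) * (br (z + γ) * br (z - γ)) = 0

/-- The function `f_{ij}(x;u)` of Lemma A.1 (with `ai, aj` the two frame vectors). -/
def fAux (br : ℂ → ℂ) (τ : V8 → ℂ) (δ : ℂ) (x ai aj u : V8) : ℂ :=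
  (br (ip u x + ip aj x) * br (ip u x - ip aj x) * (τ (x + δ • ai) * τ (x - δ • ai)) -
      br (ip u x + ip ai x) * br (ip u x - ip ai x) * (τ (x + δ • aj) * τ (x - δ • aj))) /
    (br (ip (ai + aj) x) * br (ip (ai - aj) x))


/-! Write `p = ⟨aᵢ,x⟩`, `q = ⟨aⱼ,x⟩`, `r = ⟨a_k,x⟩` and `z = ⟨u,x⟩`. After clearing
denominators, `f_{ij}(x;u) = f_{jk}(x;u)` is the Hirota equation for `(i,j,k)` plus a multiple of
the three-term relation at `(z,p,q,r)`, and `f_{ij} = f_{ji}` because `[·]` is odd; together these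
make `f_{ij}` independent of the pair. The three-term relation in `u` is the three-term relation
applied to each of the two terms of the numerator, and `f(x;aᵢ) = τ(x+aᵢδ)τ(x−aᵢδ)` since
`[0] = 0`.

Both `[0] = 0` and oddness come from the three-term relation: at `α = β = γ = 0` it reads
`3[0]²[w]² = 0`, and at `β = γ` it reduces to `([t] + [-t])[s][z+β][z-β] = 0`, where `z` can be
chosen with `[z+β][z-β] ≠ 0` because a product of two nonzero entire functions is nonzero. -/

lemma ip_add_left (u v w : V8) : ip (u + v) w = ip u w + ip v w := by
  simp [ip, add_mul, Finset.sum_add_distrib]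

lemma ip_sub_left (u v w : V8) : ip (u - v) w = ip u w - ip v w := by
  simp [ip, sub_mul, Finset.sum_sub_distrib]

lemma exists_ne_zero_and_ne_zero {f g : ℂ → ℂ} (hf : Continuous f) (hg : Differentiable ℂ g)
    (hf0 : f ≠ 0) (hg0 : g ≠ 0) : ∃ z, f z ≠ 0 ∧ g z ≠ 0 := by
  obtain ⟨z₀, hz₀⟩ := Function.ne_iff.mp hf0
  by_contra! h
  have hg_near : g =ᶠ[nhds z₀] 0 :=
    (hf.continuousAt.eventually_ne hz₀).mono fun z hz => h z hz
  have hg_an : AnalyticOnNhd ℂ g Set.univ := fun z _ => hg.analyticAt z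
  have hg_zero : Set.EqOn g 0 Set.univ :=
    hg_an.eqOn_zero_of_preconnected_of_eventuallyEq_zero isPreconnected_univ (Set.mem_univ z₀)
      hg_near
  exact hg0 (funext fun z => hg_zero (Set.mem_univ z))

/-- `brPM br s t` is the paper's `[s + t][s - t]`. -/
def brPM (br : ℂ → ℂ) (s t : ℂ) : ℂ := br (s + t) * br (s - t)

lemma brPM_ip (br : ℂ → ℂ) (u v x : V8) :
    br (ip (u + v) x) * br (ip (u - v) x) = brPM br (ip u x) (ip v x) := by
  rw [ip_add_left, ip_sub_left, brPM]

namespace ThreeTermRel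

variable {br : ℂ → ℂ}

lemma brPM_relation (h : ThreeTermRel br) (z α β γ : ℂ) :
    brPM br β γ * brPM br z α + brPM br γ α * brPM br z β + brPM br α β * brPM br z γ = 0 :=
  h z α β γ

lemma apply_zero (h : ThreeTermRel br) (hne : br ≠ 0) : br 0 = 0 := by
  obtain ⟨w, hw⟩ : ∃ w, br w ≠ 0 := Function.ne_iff.mp hne
  have H := h w 0 0 0
  simp only [add_zero, sub_zero, sub_self] at H
  have h0 : br 0 * br 0 * (br w * br w * 3) = 0 := by linear_combination H
  simpa [hw] using h0

lemma apply_neg (h : ThreeTermRel br) (hne : br ≠ 0) (hd : Differentiable ℂ br) (t : ℂ) :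
    br (-t) = -br t := by
  obtain ⟨s, hs⟩ : ∃ s, br s ≠ 0 := Function.ne_iff.mp hne
  set β := (s + t) / 2
  obtain ⟨z, hz₁, hz₂⟩ := exists_ne_zero_and_ne_zero (f := fun z => br (z + β))
    (g := fun z => br (z - β)) (hd.continuous.comp (continuous_add_const β))
    (hd.comp (differentiable_id.sub_const β))
    (Function.ne_iff.mpr ⟨s - β, by simpa using hs⟩)
    (Function.ne_iff.mpr ⟨s + β, by simpa using hs⟩)
  have H := h z ((s - t) / 2) β β
  rw [sub_self, apply_zero h hne, show β + (s - t) / 2 = s by ring,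
    show β - (s - t) / 2 = t by ring, show (s - t) / 2 + β = s by ring,
    show (s - t) / 2 - β = -t by ring] at H
  have H' : (br t + br (-t)) * (br s * (br (z + β) * br (z - β))) = 0 := by
    linear_combination H
  rcases mul_eq_zero.mp H' with h' | h'
  · linear_combination h'
  · exact absurd h' (mul_ne_zero hs (mul_ne_zero hz₁ hz₂))

lemma brPM_swap (h : ThreeTermRel br) (hne : br ≠ 0) (hd : Differentiable ℂ br) (s t : ℂ) :
    brPM br t s = -brPM br s t := by
  rw [brPM, brPM, add_comm, ← neg_sub, apply_neg h hne hd]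
  ring

lemma brPM_cyclic (h : ThreeTermRel br) (hne : br ≠ 0) (hd : Differentiable ℂ br)
    (v u₀ u₁ u₂ : ℂ) :
    brPM br u₀ v * brPM br u₁ u₂ + brPM br u₁ v * brPM br u₂ u₀ +
      brPM br u₂ v * brPM br u₀ u₁ = 0 := by
  linear_combination h.brPM_relation u₀ v u₁ u₂ - brPM br u₀ u₂ * h.brPM_swap hne hd u₁ v +
    brPM br u₁ v * h.brPM_swap hne hd u₂ u₀

end ThreeTermRel

lemma brPM_self (br : ℂ → ℂ) (h0 : br 0 = 0) (s : ℂ) : brPM br s s = 0 := by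
  rw [brPM, sub_self, h0, mul_zero]

/-- `fAux` in terms of `p = ⟨aᵢ,x⟩`, `q = ⟨aⱼ,x⟩`, the two `τ`-products `S`, `T` and
`z = ⟨u,x⟩`. -/
def pairF (br : ℂ → ℂ) (p q S T z : ℂ) : ℂ :=
  (brPM br z q * S - brPM br z p * T) / brPM br p q

lemma fAux_eq_pairF (br : ℂ → ℂ) (τ : V8 → ℂ) (δ : ℂ) (x ai aj u : V8) :
    fAux br τ δ x ai aj u =
      pairF br (ip ai x) (ip aj x) (τ (x + δ • ai) * τ (x - δ • ai))
        (τ (x + δ • aj) * τ (x - δ • aj)) (ip u x) := by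
  rw [fAux, brPM_ip]
  rfl

section pairF

variable {br : ℂ → ℂ}

lemma pairF_comm (hswap : ∀ s t, brPM br t s = -brPM br s t) (p q S T z : ℂ) :
    pairF br q p T S z = pairF br p q S T z := by
  rw [pairF, pairF, hswap p q, ← neg_div_neg_eq, neg_sub, neg_neg]

lemma pairF_self_left (h0 : br 0 = 0) {p q : ℂ} (hpq : brPM br p q ≠ 0) (S T : ℂ) :
    pairF br p q S T p = S := by
  rw [pairF, brPM_self br h0, zero_mul, sub_zero, mul_div_cancel_left₀ S hpq]

lemma pairF_eq_of_hirota (h : ThreeTermRel br) {p q r S T U : ℂ}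
    (hpq : brPM br p q ≠ 0) (hqr : brPM br q r ≠ 0)
    (hH : brPM br q r * S + brPM br r p * T + brPM br p q * U = 0) (z : ℂ) :
    pairF br p q S T z = pairF br q r T U z := by
  rw [pairF, pairF, div_eq_div_iff hpq hqr]
  linear_combination brPM br z q * hH - T * h.brPM_relation z p q r

lemma pairF_threeTerm (hcyc : ∀ v u₀ u₁ u₂, brPM br u₀ v * brPM br u₁ u₂ +
      brPM br u₁ v * brPM br u₂ u₀ + brPM br u₂ v * brPM br u₀ u₁ = 0)
    (p q S T z₀ z₁ z₂ : ℂ) :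
    pairF br p q S T z₀ * brPM br z₁ z₂ + pairF br p q S T z₁ * brPM br z₂ z₀ +
      pairF br p q S T z₂ * brPM br z₀ z₁ = 0 := by
  simp only [pairF, div_mul_eq_mul_div, ← add_div]
  rw [div_eq_zero_iff]
  left
  linear_combination S * hcyc q z₀ z₁ z₂ - T * hcyc p z₀ z₁ z₂

end pairF

lemma eq_of_symm_of_chain {ι β : Type*} {g : ι → ι → β}
    (hsymm : ∀ i j, i ≠ j → g i j = g j i)
    (hchain : ∀ i j k, i ≠ j → j ≠ k → i ≠ k → g i j = g j k)
    {i j r s : ι} (hij : i ≠ j) (hrs : r ≠ s) : g i j = g r s := by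
  have move_snd : ∀ i j k, i ≠ j → i ≠ k → g i j = g i k := by
    intro i j k hij hik
    by_cases hjk : j = k
    · rw [hjk]
    · exact (hsymm i j hij).trans (hchain j i k hij.symm hik hjk)
  by_cases hrj : r = j
  · subst hrj
    exact (hsymm i r hij).trans (move_snd r i s hij.symm hrs)
  · calc g i j = g j i := hsymm i j hij
      _ = g j r := move_snd j i r hij.symm (Ne.symm hrj)
      _ = g r j := hsymm j r (Ne.symm hrj)
      _ = g r s := move_snd r j s hrj hrs

theorem statement18_general (br : ℂ → ℂ) (hbr_ne : br ≠ 0) (hbr_ent : Differentiable ℂ br)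
    (hbr3 : ThreeTermRel br)
    (l : ℕ) (a : Fin l → V8)
    (δ : ℂ) (x : V8)
    (hnz : ∀ i j : Fin l, i ≠ j →
      br (ip (a i + a j) x) * br (ip (a i - a j) x) ≠ 0)
    (τ : V8 → ℂ)
    (hHirota : ∀ i j k : Fin l, i ≠ j → j ≠ k → i ≠ k →
      br (ip (a j + a k) x) * br (ip (a j - a k) x) * (τ (x + δ • a i) * τ (x - δ • a i)) +
        br (ip (a k + a i) x) * br (ip (a k - a i) x) * (τ (x + δ • a j) * τ (x - δ • a j)) +
        br (ip (a i + a j) x) * br (ip (a i - a j) x) * (τ (x + δ • a k) * τ (x - δ • a k))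
        = 0) :
    (∀ i j r s : Fin l, i ≠ j → r ≠ s → ∀ u : V8,
      fAux br τ δ x (a i) (a j) u = fAux br τ δ x (a r) (a s) u) ∧
    (∀ i j : Fin l, i ≠ j → ∀ u0 u1 u2 : V8,
      fAux br τ δ x (a i) (a j) u0 * (br (ip (u1 + u2) x) * br (ip (u1 - u2) x)) +
        fAux br τ δ x (a i) (a j) u1 * (br (ip (u2 + u0) x) * br (ip (u2 - u0) x)) +
        fAux br τ δ x (a i) (a j) u2 * (br (ip (u0 + u1) x) * br (ip (u0 - u1) x)) = 0) ∧
    (∀ i j : Fin l, i ≠ j → ∀ k : Fin l,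
      fAux br τ δ x (a i) (a j) (a k) = τ (x + δ • a k) * τ (x - δ • a k)) := by
  set p : Fin l → ℂ := fun i => ip (a i) x
  set T : Fin l → ℂ := fun i => τ (x + δ • a i) * τ (x - δ • a i)
  have hswap := hbr3.brPM_swap hbr_ne hbr_ent
  have hB : ∀ i j, i ≠ j → brPM br (p i) (p j) ≠ 0 := fun i j hij => by
    simpa only [brPM_ip] using hnz i j hij
  have hH : ∀ i j k, i ≠ j → j ≠ k → i ≠ k →
      brPM br (p j) (p k) * T i + brPM br (p k) (p i) * T j + brPM br (p i) (p j) * T k = 0 :=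
    fun i j k hij hjk hik => by simpa only [brPM_ip] using hHirota i j k hij hjk hik
  have hf : ∀ i j u, fAux br τ δ x (a i) (a j) u = pairF br (p i) (p j) (T i) (T j) (ip u x) :=
    fun i j u => fAux_eq_pairF br τ δ x (a i) (a j) u
  have hindep : ∀ i j r s, i ≠ j → r ≠ s → ∀ z,
      pairF br (p i) (p j) (T i) (T j) z = pairF br (p r) (p s) (T r) (T s) z :=
    fun i j r s hij hrs z =>
      eq_of_symm_of_chain (g := fun i j => pairF br (p i) (p j) (T i) (T j) z)
        (fun i j _ => (pairF_comm hswap _ _ _ _ z).symm)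
        (fun i j k hij hjk hik =>
          pairF_eq_of_hirota hbr3 (hB i j hij) (hB j k hjk) (hH i j k hij hjk hik) z)
        hij hrs
  simp only [hf, brPM_ip]
  refine ⟨fun i j r s hij hrs u => hindep i j r s hij hrs _,
    fun i j _ u₀ u₁ u₂ => pairF_threeTerm (hbr3.brPM_cyclic hbr_ne hbr_ent) _ _ _ _ _ _ _,
    fun i j hij k => ?_⟩
  have h0 := hbr3.apply_zero hbr_ne
  by_cases hkj : k = j
  · subst hkj
    rw [← pairF_comm hswap]
    exact pairF_self_left h0 (hB k i hij.symm) _ _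
  · rw [hindep i j k j hij hkj]
    exact pairF_self_left h0 (hB k j hkj) _ _

/-- Lemma A.1: given a `C_l`-frame `{±a₁,…,±a_l}` (`3 ≤ l ≤ 8`) and `τ` satisfying all
the associated Hirota equations at `x`, the function `f_{ij}(x;u)` is independent of the
pair `i ≠ j`; the common value `f(x;·)` satisfies the three-term relation in `u`, and
`f(x;a_k) = τ(x+a_kδ)τ(x−a_kδ)` for every `k`. -/
theorem statement18 (br : ℂ → ℂ) (hbr_ne : br ≠ 0) (hbr_ent : Differentiable ℂ br)
    (hbr3 : ThreeTermRel br)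
    (l : ℕ) (hl3 : 3 ≤ l) (hl8 : l ≤ 8) (a : Fin l → V8)
    (hortho : ∀ i j, ip (a i) (a j) = if i = j then 1 else 0)
    (hlat : ∀ i j, i < j → a i + a j ∈ E8lat ∧ a i - a j ∈ E8lat)
    (hlat2 : ∀ i, (2 : ℂ) • a i ∈ E8lat)
    (δ : ℂ) (x : V8)
    (hnz : ∀ i j : Fin l, i ≠ j →
      br (ip (a i + a j) x) * br (ip (a i - a j) x) ≠ 0)
    (τ : V8 → ℂ)
    (hHirota : ∀ i j k : Fin l, i ≠ j → j ≠ k → i ≠ k →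
      br (ip (a j + a k) x) * br (ip (a j - a k) x) * (τ (x + δ • a i) * τ (x - δ • a i)) +
        br (ip (a k + a i) x) * br (ip (a k - a i) x) * (τ (x + δ • a j) * τ (x - δ • a j)) +
        br (ip (a i + a j) x) * br (ip (a i - a j) x) * (τ (x + δ • a k) * τ (x - δ • a k))
        = 0) :
    (∀ i j r s : Fin l, i ≠ j → r ≠ s → ∀ u : V8,
      fAux br τ δ x (a i) (a j) u = fAux br τ δ x (a r) (a s) u) ∧
    (∀ i j : Fin l, i ≠ j → ∀ u0 u1 u2 : V8,
      fAux br τ δ x (a i) (a j) u0 * (br (ip (u1 + u2) x) * br (ip (u1 - u2) x)) +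
        fAux br τ δ x (a i) (a j) u1 * (br (ip (u2 + u0) x) * br (ip (u2 - u0) x)) +
        fAux br τ δ x (a i) (a j) u2 * (br (ip (u0 + u1) x) * br (ip (u0 - u1) x)) = 0) ∧
    (∀ i j : Fin l, i ≠ j → ∀ k : Fin l,
      fAux br τ δ x (a i) (a j) (a k) = τ (x + δ • a k) * τ (x - δ • a k)) :=
  statement18_general br hbr_ne hbr_ent hbr3 l a δ x hnz τ hHirota
end
end

section
/- (Pointwise form of the implication (B) ⇒ (C1) in the recursion theorem, Theorem 3.3.) Let a_0, a_1, a_2, a_3 ∈ V, δ ∈ ℂ, x ∈ V, and let F, G, H : V → ℂ be functions. Assume [⟨a_2+a_3,x⟩]·[⟨a_2−a_3,x⟩] ≠ 0, and that for k = 0 and k = 1 the Toda-type bilinear relation holds: [⟨a_2+a_3,x⟩][⟨a_2−a_3,x⟩]·H(x+a_kδ)·F(x−a_kδ) = [⟨a_k+a_3,x⟩][⟨a_k−a_3,x⟩]·G(x+a_2δ)G(x−a_2δ) − [⟨a_k+a_2,x⟩][⟨a_k−a_2,x⟩]·G(x+a_3δ)G(x−a_3δ). Then the type-(II_2) bilinear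 relation follows: [⟨a_1+a_2,x⟩][⟨a_1−a_2,x⟩]·H(x+a_0δ)·F(x−a_0δ) − [⟨a_0+a_2,x⟩][⟨a_0−a_2,x⟩]·H(x+a_1δ)·F(x−a_1δ) = [⟨a_1+a_0,x⟩][⟨a_1−a_0,x⟩]·G(x+a_2δ)G(x−a_2δ). -/
/-!
The three-term relation at `γ = α`, together with `[0] = 0`, gives
`[α+β]([β-α] + [α-β]) [z+α][z-α] = 0`; since a nonzero entire function times a translate of
itself is nonzero, `[·]` is odd. For an odd `[·]` the three-term relation with
`(z, α, β, γ) = (⟨a₃,x⟩, ⟨a₀,x⟩, ⟨a₁,x⟩, ⟨a₂,x⟩)` is exactly the identity relating the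
coefficients of the two Toda relations, so subtracting suitable multiples of them and cancelling
the factor `[⟨a₂+a₃,x⟩][⟨a₂-a₃,x⟩]` yields the (II₂) relation.
-/

noncomputable section

theorem ip_eq_dotProduct (x y : V8) : ip x y = x ⬝ᵥ y := rfl

theorem Differentiable.exists_mul_comp_add_ne_zero {f : ℂ → ℂ} (hf : Differentiable ℂ f)
    (hf0 : f ≠ 0) (c : ℂ) : ∃ w, f w * f (w + c) ≠ 0 := by
  by_contra! hzero
  have ha : AnalyticOnNhd ℂ f Set.univ := hf.differentiableOn.analyticOnNhd isOpen_univ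
  have ha_shift : AnalyticOnNhd ℂ (fun w ↦ f (w + c)) Set.univ :=
    ha.comp (analyticOnNhd_id.add analyticOnNhd_const) (Set.mapsTo_univ _ _)
  apply hf0
  funext w
  rcases ha.eq_zero_or_eq_zero_of_mul_eq_zero ha_shift (fun w _ ↦ hzero w)
      isPreconnected_univ with h | h
  · exact h w trivial
  · simpa using h (w - c) trivial

namespace ThreeTermRel

variable {br : ℂ → ℂ} (h : ThreeTermRel br)
include h

theorem map_zero : br 0 = 0 := by
  have h000 := h 0 0 0 0
  simp only [add_zero, sub_zero] at h000
  have h4 : br 0 ^ 4 = 0 := by linear_combination h000 / 3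
  exact pow_eq_zero_iff (by norm_num) |>.mp h4

theorem mul_add_neg_mul_eq_zero (z α β : ℂ) :
    br (z + α) * br (z - α) * (br (α + β) * (br (β - α) + br (α - β))) = 0 := by
  have hE := h z α β α
  rw [add_comm β α, sub_self, h.map_zero] at hE
  linear_combination hE

theorem odd (hne : br ≠ 0) (hent : Differentiable ℂ br) : Function.Odd br := by
  have hsym (α β : ℂ) : br (α + β) * (br (β - α) + br (α - β)) = 0 := by
    obtain ⟨w, hw⟩ := hent.exists_mul_comp_add_ne_zero hne (2 * α)
    have hz := h.mul_add_neg_mul_eq_zero (w + α) α β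
    rw [add_sub_cancel_right, add_assoc, ← two_mul, mul_comm (br (w + 2 * α))] at hz
    exact (mul_eq_zero.mp hz).resolve_left hw
  intro v
  obtain ⟨u, hu⟩ := Function.ne_iff.mp hne
  have huv := hsym ((u - v) / 2) ((u + v) / 2)
  rw [show (u - v) / 2 + (u + v) / 2 = u by ring, show (u + v) / 2 - (u - v) / 2 = v by ring,
    show (u - v) / 2 - (u + v) / 2 = -v by ring] at huv
  linear_combination (mul_eq_zero.mp huv).resolve_left hu

theorem sub_eq_of_odd (hodd : Function.Odd br) (p₀ p₁ p₂ p₃ : ℂ) :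
    br (p₁ + p₂) * br (p₁ - p₂) * (br (p₀ + p₃) * br (p₀ - p₃)) -
      br (p₀ + p₂) * br (p₀ - p₂) * (br (p₁ + p₃) * br (p₁ - p₃)) =
      br (p₁ + p₀) * br (p₁ - p₀) * (br (p₂ + p₃) * br (p₂ - p₃)) := by
  have swap (a b : ℂ) : br (a - b) = -br (b - a) := by rw [← neg_sub, hodd]
  have hE := h p₃ p₀ p₁ p₂
  rw [swap p₃ p₀, swap p₂ p₀, swap p₃ p₁, swap p₀ p₁, swap p₃ p₂, add_comm p₃ p₀,
    add_comm p₂ p₀, add_comm p₃ p₁, add_comm p₀ p₁, add_comm p₃ p₂] at hE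
  linear_combination -hE

end ThreeTermRel

/-- Pointwise form of the implication (B) ⇒ (C1) in Theorem 3.3: the two Toda-type
bilinear relations (for `k = 0, 1`) imply the type-(II₂) bilinear relation. -/
theorem statement19 (br : ℂ → ℂ) (hbr_ne : br ≠ 0) (hbr_ent : Differentiable ℂ br)
    (hbr3 : ThreeTermRel br)
    (a0 a1 a2 a3 : V8) (δ : ℂ) (x : V8) (F G H : V8 → ℂ)
    (hgen : br (ip (a2 + a3) x) * br (ip (a2 - a3) x) ≠ 0)
    (h0 : br (ip (a2 + a3) x) * br (ip (a2 - a3) x) * (H (x + δ • a0) * F (x - δ • a0)) =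
      br (ip (a0 + a3) x) * br (ip (a0 - a3) x) * (G (x + δ • a2) * G (x - δ • a2)) -
        br (ip (a0 + a2) x) * br (ip (a0 - a2) x) * (G (x + δ • a3) * G (x - δ • a3)))
    (h1 : br (ip (a2 + a3) x) * br (ip (a2 - a3) x) * (H (x + δ • a1) * F (x - δ • a1)) =
      br (ip (a1 + a3) x) * br (ip (a1 - a3) x) * (G (x + δ • a2) * G (x - δ • a2)) -
        br (ip (a1 + a2) x) * br (ip (a1 - a2) x) * (G (x + δ • a3) * G (x - δ • a3))) :
    br (ip (a1 + a2) x) * br (ip (a1 - a2) x) * (H (x + δ • a0) * F (x - δ • a0)) -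
      br (ip (a0 + a2) x) * br (ip (a0 - a2) x) * (H (x + δ • a1) * F (x - δ • a1)) =
      br (ip (a1 + a0) x) * br (ip (a1 - a0) x) * (G (x + δ • a2) * G (x - δ • a2)) := by
  simp only [ip_eq_dotProduct, add_dotProduct, sub_dotProduct] at hgen h0 h1 ⊢
  have hcoef := hbr3.sub_eq_of_odd (hbr3.odd hbr_ne hbr_ent) (a0 ⬝ᵥ x) (a1 ⬝ᵥ x) (a2 ⬝ᵥ x)
    (a3 ⬝ᵥ x)
  apply mul_left_cancel₀ hgen
  linear_combination br (a1 ⬝ᵥ x + a2 ⬝ᵥ x) * br (a1 ⬝ᵥ x - a2 ⬝ᵥ x) * h0 -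
    br (a0 ⬝ᵥ x + a2 ⬝ᵥ x) * br (a0 ⬝ᵥ x - a2 ⬝ᵥ x) * h1 +
    G (x + δ • a2) * G (x - δ • a2) * hcoef
end
end
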